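/- arXiv:2208.06799 — 2 statements merged into one kernel-verified Lean document; each statement's English description precedes it below -/
import Mathlib

section
/- Let U and V be Hilbert C*-modules over a unital C*-algebra A and let T : U → V be an adjointable operator. Then T is surjective if and only if its adjoint T* is bounded below with respect to the norm, i.e., there exists m > 0 such that ‖T*g‖ ≥ m‖g‖ for all g ∈ V. -/
open MeasureTheory CStarModule
open scoped RightActions

/-- The Hilbert C*-module class as it stood in the older Mathlib (right `Aᵐᵒᵖ`-action). -/
class RightCStarModule (A E : Type*) [NonUnitalSemiring A] [StarRing A] [Module ℂ A]
    [AddCommGroup E] [Module ℂ E] [PartialOrder A] [SMul Aᵐᵒᵖ E] [Norm A] [Norm E]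
    extends Inner A E where
  inner_add_right {x} {y} {z} : inner x (y + z) = inner x y + inner x z
  inner_self_nonneg {x} : 0 ≤ inner x x
  inner_self {x} : inner x x = 0 ↔ x = 0
  inner_op_smul_right {a : A} {x y : E} : inner x (y <• a) = inner x y * a
  inner_smul_right_complex {z : ℂ} {x} {y} : inner x (z • y) = z • inner x y
  star_inner x y : star (inner x y) = inner y x
  norm_eq_sqrt_norm_inner_self x : ‖x‖ = √‖inner x x‖

variable {A : Type*} [CStarAlgebra A] [PartialOrder A] [StarOrderedRing A]
variable {U : Type*} [NormedAddCommGroup U] [NormedSpace ℂ U] [CompleteSpace U]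
  [SMul Aᵐᵒᵖ U] [RightCStarModule A U]
variable {Ω : Type*} [MeasurableSpace Ω]

local notation "⟪" x ", " y "⟫" => (inner A x y : A)

/-- `F : Ω → U` is a continuous frame for the Hilbert C*-module `U` with bounds `A₀`, `B`. -/
def IsContinuousFrame (μ : Measure Ω) (F : Ω → U) (A₀ B : ℝ) : Prop :=
  0 < A₀ ∧ 0 < B ∧
  (∀ f : U, StronglyMeasurable fun ω => (inner A f (F ω) : A)) ∧
  (∀ f : U, Integrable (fun ω => (inner A f (F ω) : A) * inner A (F ω) f) μ) ∧
  ∀ f : U, A₀ • (inner A f f : A) ≤ (∫ ω, (inner A f (F ω) : A) * inner A (F ω) f ∂μ) ∧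
    (∫ ω, (inner A f (F ω) : A) * inner A (F ω) f ∂μ) ≤ B • (inner A f f : A)

/-- `F : Ω → U` is a continuous Bessel mapping with bound `B`. -/
def IsBessel (μ : Measure Ω) (F : Ω → U) (B : ℝ) : Prop :=
  0 < B ∧
  (∀ f : U, StronglyMeasurable fun ω => (inner A f (F ω) : A)) ∧
  (∀ f : U, Integrable (fun ω => (inner A f (F ω) : A) * inner A (F ω) f) μ) ∧
  ∀ f : U, (∫ ω, (inner A f (F ω) : A) * inner A (F ω) f ∂μ) ≤ B • (inner A f f : A)

/-- `φ : Ω → A` belongs to the Hilbert `A`-module `L²(Ω, A)`. -/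
def MemL2 (μ : Measure Ω) (φ : Ω → A) : Prop :=
  AEStronglyMeasurable φ μ ∧ Integrable (fun ω => star (φ ω) * φ ω) μ

/-- `G` is a dual of the continuous Bessel mapping `F` (weak reconstruction formula). -/
def IsDual (μ : Measure Ω) (F G : Ω → U) : Prop :=
  (∃ B : ℝ, IsBessel (A := A) μ G B) ∧
  ∀ f g : U, (inner A f g : A) = ∫ ω, (inner A f (G ω) : A) * inner A (F ω) g ∂μ

/-!
If `T` is onto, the open mapping theorem gives for every `g` a preimage `f` with `‖f‖ ≤ C‖g‖`,
and `‖g‖² = ‖⟪f, T* g⟫‖ ≤ C ‖g‖ ‖T* g‖`.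

Conversely, if `‖T* g‖ ≥ m ‖g‖`, then `⟪T* g, T* g⟫ ≤ ⟪(T T* + s) g, g⟫` for every real `s ≥ 0`,
so by Cauchy–Schwarz all the operators `T T* + s` are bounded below by `m²`. For `s > ‖T T*‖`
the operator `T T* + s` is invertible, and an invertible operator bounded below by `c` stays
invertible under perturbations of norm `< c`; lowering `s` to `0` in steps of `m² / 2` shows
that `T T*` is invertible, hence `T` is onto.

Adjointable maps are linear and, by the closed graph theorem, bounded.
-/

namespace RightCStarModule

section Algebraic

variable {A E F : Type*} [NonUnitalRing A] [StarRing A] [Module ℂ A] [PartialOrder A] [Norm A]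
  [AddCommGroup E] [Module ℂ E] [SMul Aᵐᵒᵖ E] [Norm E] [RightCStarModule A E]
  [AddCommGroup F] [Module ℂ F] [SMul Aᵐᵒᵖ F] [Norm F] [RightCStarModule A F]

theorem inner_add_left (x y z : E) : inner A (x + y) z = inner A x z + inner A y z := by
  rw [← star_inner z, RightCStarModule.inner_add_right, star_add, star_inner, star_inner]

theorem inner_smul_left_complex [StarModule ℂ A] (c : ℂ) (x y : E) :
    inner A (c • x) y = star c • inner A x y := by
  rw [← star_inner y, RightCStarModule.inner_smul_right_complex, star_smul, star_inner]

theorem ext_inner_right {x y : E} (h : ∀ g : E, inner A x g = inner A y g) : x = y := by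
  have hsub : inner A (x - y) (x - y) = inner A x (x - y) - inner A y (x - y) :=
    eq_sub_of_add_eq (by rw [← inner_add_left, sub_add_cancel])
  rwa [h, sub_self, RightCStarModule.inner_self, sub_eq_zero] at hsub

theorem inner_op_smul_star_left (a : A) (x y : E) :
    inner A (x <• star a) y = a * inner A x y := by
  rw [← star_inner y, RightCStarModule.inner_op_smul_right, star_mul, star_star, star_inner]

/-- The conjugate module of `E`: complex scalars act through `conj`, `a • x = x <• star a`, and
the inner product of `x` and `y` is `inner A y x`. It is a `CStarModule`, through which the
Cauchy–Schwarz inequality is transferred to `RightCStarModule`. -/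
def Conj (E : Type*) : Type _ := E

instance : AddCommGroup (Conj E) := inferInstanceAs (AddCommGroup E)

instance : Module ℂ (Conj E) := Module.compHom E (starRingEnd ℂ)

instance : Norm (Conj E) := inferInstanceAs (Norm E)

instance : SMul A (Conj E) := ⟨fun a (x : E) => (x <• star a : E)⟩

instance : Inner A (Conj E) := ⟨fun x y => inner A (E := E) y x⟩

instance [StarModule ℂ A] : CStarModule A (Conj E) where
  inner_add_right {x y z} := inner_add_left (A := A) (E := E) y z x
  inner_self_nonneg {x} := RightCStarModule.inner_self_nonneg (A := A) (E := E) (x := x)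
  inner_self {x} := RightCStarModule.inner_self (A := A) (E := E) (x := x)
  inner_op_smul_right {a x y} := inner_op_smul_star_left (E := E) a y x
  inner_smul_right_complex {c x y} := by
    have h := inner_smul_left_complex (A := A) (E := E) (starRingEnd ℂ c) y x
    rwa [Complex.star_def, Complex.conj_conj] at h
  star_inner x y := RightCStarModule.star_inner (A := A) (E := E) y x
  norm_eq_sqrt_norm_inner_self x :=
    RightCStarModule.norm_eq_sqrt_norm_inner_self (A := A) (E := E) x

variable (A) in
def IsAdjoint (T : E → F) (T' : F → E) : Prop :=
  ∀ (x : E) (y : F), inner A (T x) y = inner A x (T' y)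

variable {T : E → F} {T' : F → E}

theorem IsAdjoint.symm (hT : IsAdjoint A T T') : IsAdjoint A T' T := fun y x => by
  rw [← star_inner x, ← hT, star_inner]

def IsAdjoint.toLinearMap [StarModule ℂ A] (hT : IsAdjoint A T T') : E →ₗ[ℂ] F where
  toFun := T
  map_add' x y := ext_inner_right (A := A) fun g => by
    rw [hT, inner_add_left, inner_add_left, hT, hT]
  map_smul' c x := ext_inner_right (A := A) fun g => by
    rw [hT, RingHom.id_apply, inner_smul_left_complex, inner_smul_left_complex, hT]

end Algebraic

section Norm

variable {A E F : Type*} [NonUnitalCStarAlgebra A] [PartialOrder A]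
  [AddCommGroup E] [Module ℂ E] [SMul Aᵐᵒᵖ E] [Norm E] [RightCStarModule A E]
  [AddCommGroup F] [Module ℂ F] [SMul Aᵐᵒᵖ F] [Norm F] [RightCStarModule A F]

variable (A) in
theorem norm_sq_eq (x : E) : ‖x‖ ^ 2 = ‖inner A x x‖ :=
  CStarModule.norm_sq_eq A (E := Conj E)

variable [StarOrderedRing A]

theorem norm_inner_le (x y : E) : ‖inner A x y‖ ≤ ‖x‖ * ‖y‖ := by
  rw [mul_comm]
  exact CStarModule.norm_inner_le (Conj E) (x := y) (y := x)

theorem norm_sq_le_of_inner_self_le {u : E} {x y : F} (h : inner A u u ≤ inner A x y) :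
    ‖u‖ ^ 2 ≤ ‖x‖ * ‖y‖ := by
  rw [norm_sq_eq A]
  exact (CStarAlgebra.norm_le_norm_of_nonneg_of_le inner_self_nonneg h).trans (norm_inner_le x y)

end Norm

section Normed

variable {A E F : Type*} [NonUnitalCStarAlgebra A] [PartialOrder A] [StarOrderedRing A]
  [NormedAddCommGroup E] [NormedSpace ℂ E] [SMul Aᵐᵒᵖ E] [RightCStarModule A E]
  [NormedAddCommGroup F] [NormedSpace ℂ F] [SMul Aᵐᵒᵖ F] [RightCStarModule A F]

variable (A) in
theorem continuous_inner_left (y : E) : Continuous fun x : E => inner A x y :=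
  AddMonoidHomClass.continuous_of_bound
    (AddMonoidHom.mk' (fun x : E => inner A x y) fun x x' => inner_add_left x x' y) ‖y‖
    fun x => (norm_inner_le x y).trans_eq (mul_comm _ _)

variable {T : E → F} {T' : F → E}

theorem IsAdjoint.isClosed_graph [CompleteSpace E] [CompleteSpace F] (hT : IsAdjoint A T T') :
    IsClosed (hT.toLinearMap.graph : Set (E × F)) := by
  have hgraph : (hT.toLinearMap.graph : Set (E × F)) =
      ⋂ y : F, {p | inner A p.2 y = inner A p.1 (T' y)} := by
    ext ⟨x, z⟩
    simp only [SetLike.mem_coe, LinearMap.mem_graph_iff, Set.mem_iInter, Set.mem_ofPred_eq]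
    exact ⟨fun h y => h ▸ hT x y,
      fun h => ext_inner_right (A := A) fun y => (h y).trans (hT x y).symm⟩
  rw [hgraph]
  exact isClosed_iInter fun y => isClosed_eq ((continuous_inner_left A y).comp continuous_snd)
    ((continuous_inner_left A (T' y)).comp continuous_fst)

def IsAdjoint.toCLM [CompleteSpace E] [CompleteSpace F] (hT : IsAdjoint A T T') : E →L[ℂ] F :=
  ⟨hT.toLinearMap, hT.toLinearMap.continuous_of_isClosed_graph hT.isClosed_graph⟩

theorem IsAdjoint.inner_self_le_inner_comp_add_smul (hT : IsAdjoint A T T') {s : ℝ} (hs : 0 ≤ s)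
    (y : F) :
    inner A (T' y) (T' y) ≤ inner A (T (T' y) + (s : ℂ) • y) y := by
  rw [inner_add_left, hT, inner_smul_left_complex, Complex.star_def, Complex.conj_ofReal,
    Complex.coe_smul]
  exact le_add_of_nonneg_right (smul_nonneg hs inner_self_nonneg)

theorem IsAdjoint.norm_apply_le_mul_norm_adjoint_apply (hT : IsAdjoint A T T') {C : ℝ}
    (hC : 0 ≤ C) {x : E} (hx : ‖x‖ ≤ C * ‖T x‖) : ‖T x‖ ≤ C * ‖T' (T x)‖ := by
  rcases (norm_nonneg (T x)).eq_or_lt with h0 | hpos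
  · rw [← h0]
    positivity
  refine le_of_mul_le_mul_right ?_ hpos
  calc ‖T x‖ * ‖T x‖ = ‖T x‖ ^ 2 := (sq _).symm
    _ ≤ ‖x‖ * ‖T' (T x)‖ := norm_sq_le_of_inner_self_le (hT x (T x)).le
    _ ≤ C * ‖T' (T x)‖ * ‖T x‖ := by
      rw [mul_right_comm]
      exact mul_le_mul_of_nonneg_right hx (norm_nonneg _)

theorem IsAdjoint.mul_self_mul_norm_le_norm_comp_add_smul {m : ℝ} (hT : IsAdjoint A T T')
    (hm : 0 ≤ m) (hbelow : ∀ y, m * ‖y‖ ≤ ‖T' y‖) {s : ℝ} (hs : 0 ≤ s) (y : F) :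
    m * m * ‖y‖ ≤ ‖T (T' y) + (s : ℂ) • y‖ := by
  rcases (norm_nonneg y).eq_or_lt with h0 | hpos
  · rw [← h0, mul_zero]
    exact norm_nonneg _
  refine le_of_mul_le_mul_right ?_ hpos
  calc m * m * ‖y‖ * ‖y‖ = (m * ‖y‖) ^ 2 := by ring
    _ ≤ ‖T' y‖ ^ 2 := by gcongr; exact hbelow y
    _ ≤ ‖T (T' y) + (s : ℂ) • y‖ * ‖y‖ :=
      norm_sq_le_of_inner_self_le (hT.inner_self_le_inner_comp_add_smul hs y)

end Normed

end RightCStarModule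

namespace ContinuousLinearMap

variable {𝕜 E : Type*} [RCLike 𝕜] [NormedAddCommGroup E] [NormedSpace 𝕜 E] [CompleteSpace E]

theorem isUnit_of_norm_sub_lt {u v : E →L[𝕜] E} {c : ℝ} (hc : 0 < c) (hu : IsUnit u)
    (hbelow : ∀ x, c * ‖x‖ ≤ ‖u x‖) (huv : ‖v - u‖ < c) : IsUnit v := by
  obtain ⟨u, rfl⟩ := hu
  have hinv : ‖(↑u⁻¹ : E →L[𝕜] E)‖ ≤ c⁻¹ := opNorm_le_bound _ (by positivity) fun x => by
    have hx := hbelow ((↑u⁻¹ : E →L[𝕜] E) x)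
    rwa [← mul_apply_eq_comp, u.mul_inv, one_apply_eq_self, ← le_inv_mul_iff₀ hc] at hx
  have hsmall : ‖(↑u⁻¹ : E →L[𝕜] E) * (u - v)‖ < 1 :=
    calc ‖(↑u⁻¹ : E →L[𝕜] E) * (u - v)‖ ≤ ‖(↑u⁻¹ : E →L[𝕜] E)‖ * ‖(u : E →L[𝕜] E) - v‖ :=
          norm_mul_le _ _
      _ ≤ c⁻¹ * ‖(u : E →L[𝕜] E) - v‖ := by gcongr
      _ < c⁻¹ * c := by gcongr; rwa [norm_sub_rev]
      _ = 1 := inv_mul_cancel₀ hc.ne'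
  have hv : v = u * (1 - ↑u⁻¹ * (u - v)) := by
    rw [mul_sub, mul_one, ← mul_assoc, u.mul_inv, one_mul, sub_sub_cancel]
  rw [hv]
  exact u.isUnit.mul (Units.oneSub _ hsmall).isUnit

theorem isUnit_of_forall_nonneg_le_norm_add_smul_one_apply {Q : E →L[𝕜] E} {c : ℝ} (hc : 0 < c)
    (hbelow : ∀ s : ℝ, 0 ≤ s → ∀ x, c * ‖x‖ ≤ ‖(Q + (s : 𝕜) • 1) x‖) : IsUnit Q := by
  have hstep : ∀ n : ℕ, ∀ s : ℝ, 0 ≤ s → ‖Q‖ < s + n * (c / 2) → IsUnit (Q + (s : 𝕜) • 1) := by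
    intro n
    induction n with
    | zero =>
      intro s _ hQ
      have hs : 0 < s := by linarith [norm_nonneg Q]
      have hunit : IsUnit ((s : 𝕜) • (1 : E →L[𝕜] E)) := by
        simpa [Algebra.algebraMap_eq_smul_one] using
          (isUnit_iff_ne_zero.2 (RCLike.ofReal_ne_zero.2 hs.ne')).map (algebraMap 𝕜 (E →L[𝕜] E))
      refine isUnit_of_norm_sub_lt hs hunit (fun x => ?_) (by simpa using hQ)
      simp [norm_smul, abs_of_pos hs]
    | succ n ih =>
      intro s hs hQ
      have hunit := ih (s + c / 2) (by positivity) (by push_cast at hQ; linarith)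
      refine isUnit_of_norm_sub_lt hc hunit (hbelow _ (by positivity)) ?_
      rw [add_sub_add_left_eq_sub, ← sub_smul, ← RCLike.ofReal_sub, sub_add_cancel_left]
      refine (opNorm_le_bound _ (by positivity) fun x => ?_).trans_lt (half_lt_self hc)
      simp [norm_smul, abs_of_pos hc]
  obtain ⟨n, hn⟩ := exists_nat_gt (‖Q‖ / (c / 2))
  simpa using hstep n 0 le_rfl (by rw [div_lt_iff₀ (by positivity)] at hn; simpa using hn)

end ContinuousLinearMap

/-- An adjointable map between Hilbert C*-modules is surjective iff its adjoint is
bounded below with respect to the norm. -/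
theorem surjective_iff_adjoint_bounded_below
    {V : Type*} [NormedAddCommGroup V] [NormedSpace ℂ V] [CompleteSpace V]
    [SMul Aᵐᵒᵖ V] [RightCStarModule A V]
    (T : U → V) (T' : V → U)
    (hadj : ∀ (f : U) (g : V), (inner A (T f) g : A) = inner A f (T' g)) :
    Function.Surjective T ↔ ∃ m > (0 : ℝ), ∀ g : V, m * ‖g‖ ≤ ‖T' g‖ := by
  have hT : RightCStarModule.IsAdjoint A T T' := hadj
  constructor
  · intro hsurj
    obtain ⟨C, hC, hpre⟩ := hT.toCLM.exists_preimage_norm_le hsurj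
    refine ⟨C⁻¹, inv_pos.2 hC, fun g => (inv_mul_le_iff₀ hC).2 ?_⟩
    obtain ⟨f, rfl, hf⟩ := hpre g
    exact hT.norm_apply_le_mul_norm_adjoint_apply hC.le hf
  · rintro ⟨m, hm, hbelow⟩
    have hQ : IsUnit (hT.toCLM ∘L hT.symm.toCLM) :=
      ContinuousLinearMap.isUnit_of_forall_nonneg_le_norm_add_smul_one_apply (mul_pos hm hm)
        fun s hs => hT.mul_self_mul_norm_le_norm_comp_add_smul hm.le hbelow hs
    have hTT' : Function.Surjective (T ∘ T') := (ContinuousLinearMap.isUnit_iff_bijective.1 hQ).2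
    exact hTT'.of_comp
end

section
/- Let U be a Hilbert C*-module over a unital C*-algebra A and F : Ω → U weakly measurable. Then F is a continuous Bessel mapping (i.e., ∫_Ω ⟨f,F(ω)⟩⟨F(ω),f⟩ dμ(ω) ≤ B⟨f,f⟩ for some B > 0 and all f) if and only if there exists D > 0 such that ‖∫_Ω ⟨f,F(ω)⟩⟨F(ω),f⟩ dμ(ω)‖ ≤ D‖⟨f,f⟩‖ for all f ∈ U. -/
open MeasureTheory CStarModule
open scoped RightActions

variable {A : Type*} [CStarAlgebra A] [PartialOrder A] [StarOrderedRing A]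
variable {U : Type*} [NormedAddCommGroup U] [NormedSpace ℂ U] [CompleteSpace U]
  [SMul Aᵐᵒᵖ U] [RightCStarModule A U]
variable {Ω : Type*} [MeasurableSpace Ω]

local notation "⟪" x ", " y "⟫" => (inner A x y : A)

/-! The easy direction is monotonicity of the norm on the positive cone. For the converse, the
frame operator `S f := ∫ ⟨f,F ω⟩⟨F ω,f⟩` satisfies `S (f <• a) = a (S f) a` for `a ≥ 0`.
Conjugating by `a = (ε + ⟨f,f⟩)^{-1/2}` makes `a ⟨f,f⟩ a ≤ 1`, so the norm bound gives
`a (S f) a ≤ D`, i.e. `S f ≤ D (ε + ⟨f,f⟩)`; let `ε → 0`. -/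

theorem le_of_forall_pos_le_add_smul {E : Type*} [AddCommGroup E] [Module ℝ E] [PartialOrder E]
    [TopologicalSpace E] [ContinuousAdd E] [ContinuousSMul ℝ E] [ClosedIciTopology E]
    {a b c : E} (h : ∀ ε > (0 : ℝ), a ≤ b + ε • c) : a ≤ b := by
  have hlim : Filter.Tendsto (fun ε : ℝ => b + ε • c) (nhdsWithin 0 (Set.Ioi 0)) (nhds b) := by
    simpa using (tendsto_nhdsWithin_of_tendsto_nhds
      ((continuous_const.add (continuous_id.smul continuous_const)).tendsto 0) :
      Filter.Tendsto (fun ε : ℝ => b + ε • c) _ (nhds (b + (0 : ℝ) • c)))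
  exact ge_of_tendsto hlim (eventually_nhdsWithin_of_forall h)

theorem CStarRing.norm_one_le {R : Type*} [NormedRing R] [StarRing R] [CStarRing R] :
    ‖(1 : R)‖ ≤ 1 := by
  rcases subsingleton_or_nontrivial R with _ | _
  · simp [Subsingleton.elim (1 : R) 0]
  · exact CStarRing.norm_one.le

namespace CFC

open Ring

theorem norm_conjSqrt_inverse_le_one {x y : A} (hx : 0 ≤ x) (hxy : x ≤ y)
    (hy : IsStrictlyPositive y) : ‖conjSqrt y⁻¹ʳ x‖ ≤ 1 := by
  have hconj : 0 ≤ conjSqrt y⁻¹ʳ x := map_zero (conjSqrt y⁻¹ʳ) ▸ conjSqrt_le_conjSqrt hx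
  calc ‖conjSqrt y⁻¹ʳ x‖ ≤ ‖conjSqrt y⁻¹ʳ y‖ :=
        CStarAlgebra.norm_le_norm_of_nonneg_of_le hconj (conjSqrt_le_conjSqrt hxy)
    _ = ‖(1 : A)‖ := by rw [conjSqrt_ringInverse_self y]
    _ ≤ 1 := CStarRing.norm_one_le

theorem le_smul_of_norm_conjSqrt_inverse_le {Q y : A} (hQ : IsSelfAdjoint Q)
    (hy : IsStrictlyPositive y) {D : ℝ} (h : ‖conjSqrt y⁻¹ʳ Q‖ ≤ D) : Q ≤ D • y := by
  have hconj : IsSelfAdjoint (conjSqrt y⁻¹ʳ Q) :=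
    hQ.conjugate_self (sqrt_nonneg _).isSelfAdjoint
  have hle : conjSqrt y⁻¹ʳ Q ≤ D • (1 : A) :=
    calc conjSqrt y⁻¹ʳ Q ≤ algebraMap ℝ A ‖conjSqrt y⁻¹ʳ Q‖ := hconj.le_algebraMap_norm_self
      _ ≤ D • (1 : A) := by
        rw [Algebra.algebraMap_eq_smul_one]
        exact smul_le_smul_of_nonneg_right h zero_le_one
  calc Q = conjSqrt y (conjSqrt y⁻¹ʳ Q) := (conjSqrt_conjSqrt_ringInverse y Q).symm
    _ ≤ conjSqrt y (D • (1 : A)) := conjSqrt_le_conjSqrt hle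
    _ = D • y := by rw [map_smul, conjSqrt_one y]

end CFC

open CFC Ring in
theorem le_smul_of_forall_norm_conj_le {Q x : A} (hQ : IsSelfAdjoint Q) (hx : 0 ≤ x) {D : ℝ}
    (hD : 0 ≤ D) (h : ∀ a : A, 0 ≤ a → ‖a * Q * a‖ ≤ D * ‖a * x * a‖) : Q ≤ D • x := by
  refine le_of_forall_pos_le_add_smul (c := D • (1 : A)) fun ε hε => ?_
  have hε' : IsStrictlyPositive (algebraMap ℝ A ε) := isStrictlyPositive_algebraMap hε
  set y := algebraMap ℝ A ε + x
  have hy : IsStrictlyPositive y := hε'.add_nonneg hx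
  have hnorm : ‖conjSqrt y⁻¹ʳ Q‖ ≤ D :=
    calc ‖conjSqrt y⁻¹ʳ Q‖ ≤ D * ‖conjSqrt y⁻¹ʳ x‖ := h _ (sqrt_nonneg _)
      _ ≤ D := mul_le_of_le_one_right hD
        (norm_conjSqrt_inverse_le_one hx (le_add_of_nonneg_left hε'.nonneg) hy)
  calc Q ≤ D • y := le_smul_of_norm_conjSqrt_inverse_le hQ hy hnorm
    _ = D • x + ε • D • (1 : A) := by
      rw [smul_add, Algebra.algebraMap_eq_smul_one, smul_comm D ε, add_comm]

section

omit [CompleteSpace U]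

namespace RightCStarModule

omit [StarOrderedRing A] in
theorem inner_op_smul_left (a : A) (x y : U) : ⟪x <• a, y⟫ = star a * ⟪x, y⟫ := by
  rw [← RightCStarModule.star_inner y, RightCStarModule.inner_op_smul_right, star_mul,
    RightCStarModule.star_inner]

omit [StarOrderedRing A] in
theorem inner_op_smul_op_smul (a : A) (x y : U) :
    ⟪x <• a, y <• a⟫ = star a * ⟪x, y⟫ * a := by
  rw [inner_op_smul_left, RightCStarModule.inner_op_smul_right, mul_assoc]

omit [StarOrderedRing A] in
theorem inner_op_smul_mul_inner_op_smul (a : A) (x y : U) :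
    ⟪x <• a, y⟫ * ⟪y, x <• a⟫ = star a * (⟪x, y⟫ * ⟪y, x⟫) * a := by
  rw [inner_op_smul_left, RightCStarModule.inner_op_smul_right, mul_assoc, mul_assoc, mul_assoc]

theorem inner_mul_inner_swap_nonneg (x y : U) : 0 ≤ ⟪x, y⟫ * ⟪y, x⟫ := by
  rw [← RightCStarModule.star_inner y x]
  exact star_mul_self_nonneg _

end RightCStarModule

theorem integral_inner_mul_inner_nonneg (μ : Measure Ω) (F : Ω → U) (f : U) :
    0 ≤ ∫ ω, ⟪f, F ω⟫ * ⟪F ω, f⟫ ∂μ :=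
  integral_nonneg fun ω => RightCStarModule.inner_mul_inner_swap_nonneg f (F ω)

omit [StarOrderedRing A] in
theorem integral_inner_op_smul_mul_inner_op_smul {μ : Measure Ω} {F : Ω → U} {f : U}
    (hint : Integrable (fun ω => ⟪f, F ω⟫ * ⟪F ω, f⟫) μ) (a : A) :
    ∫ ω, ⟪f <• a, F ω⟫ * ⟪F ω, f <• a⟫ ∂μ = star a * (∫ ω, ⟪f, F ω⟫ * ⟪F ω, f⟫ ∂μ) * a := by
  simp_rw [RightCStarModule.inner_op_smul_mul_inner_op_smul]
  rw [integral_mul_const_of_integrable (hint.const_mul _), integral_const_mul_of_integrable hint]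

end

theorem bessel_iff_norm_bound_general (μ : Measure Ω) (F : Ω → U)
    (hint : ∀ f : U, Integrable (fun ω => ⟪f, F ω⟫ * ⟪F ω, f⟫) μ) :
    (∃ B > (0 : ℝ), ∀ f : U, (∫ ω, ⟪f, F ω⟫ * ⟪F ω, f⟫ ∂μ) ≤ B • ⟪f, f⟫) ↔
      ∃ D > (0 : ℝ), ∀ f : U, ‖∫ ω, ⟪f, F ω⟫ * ⟪F ω, f⟫ ∂μ‖ ≤ D * ‖⟪f, f⟫‖ := by
  have hpos := integral_inner_mul_inner_nonneg (A := A) μ F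
  constructor
  · rintro ⟨B, hB, hle⟩
    refine ⟨B, hB, fun f => ?_⟩
    calc ‖∫ ω, ⟪f, F ω⟫ * ⟪F ω, f⟫ ∂μ‖ ≤ ‖B • ⟪f, f⟫‖ :=
          CStarAlgebra.norm_le_norm_of_nonneg_of_le (hpos f) (hle f)
      _ = B * ‖⟪f, f⟫‖ := by rw [norm_smul, Real.norm_of_nonneg hB.le]
  · rintro ⟨D, hD, hnorm⟩
    refine ⟨D, hD, fun f => le_smul_of_forall_norm_conj_le (hpos f).isSelfAdjoint
      RightCStarModule.inner_self_nonneg hD.le fun a ha => ?_⟩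
    have key := hnorm (f <• a)
    rwa [integral_inner_op_smul_mul_inner_op_smul (hint f),
      RightCStarModule.inner_op_smul_op_smul, ha.isSelfAdjoint.star_eq] at key

/-- A weakly measurable `F : Ω → U` is a continuous Bessel mapping iff there is `D > 0`
such that `‖∫ ⟨f,F(ω)⟩⟨F(ω),f⟩ dμ‖ ≤ D ‖⟨f,f⟩‖` for all `f`. -/
theorem bessel_iff_norm_bound (μ : Measure Ω) (F : Ω → U)
    (hmeas : ∀ f : U, StronglyMeasurable fun ω => ⟪f, F ω⟫)
    (hint : ∀ f : U, Integrable (fun ω => ⟪f, F ω⟫ * ⟪F ω, f⟫) μ) :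
    (∃ B > (0 : ℝ), ∀ f : U, (∫ ω, ⟪f, F ω⟫ * ⟪F ω, f⟫ ∂μ) ≤ B • ⟪f, f⟫) ↔
      ∃ D > (0 : ℝ), ∀ f : U, ‖∫ ω, ⟪f, F ω⟫ * ⟪F ω, f⟫ ∂μ‖ ≤ D * ‖⟪f, f⟫‖ :=
  bessel_iff_norm_bound_general μ F hint
end
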